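/- For every integer $n \ge 2$: $\sum_{k=0}^{n} (4k-1)^3 \frac{(-\frac{1}{2})_k^2\,(-n)_k\,(n-1)_k}{(1)_k^2\,(n+\frac{1}{2})_k\,(\frac{3}{2}-n)_k}\; \sum_{j=1}^{k}\left(\frac{1}{4j^2} - \frac{1}{(2j-3)^2}\right) = \frac{(2n-1)^2 (7n^2 - 7n + 1)}{4 n^2 (n-1)^2}$. -/

import Mathlib

open Finset

/-- Pochhammer symbol `(a)_k = a(a+1)⋯(a+k-1)` for a rational `a`. -/
def poch (a : ℚ) (k : ℕ) : ℚ := ∏ i ∈ Finset.range k, (a + i)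

/-- Euler numbers, defined by `∑ E_n x^n/n! = 2e^x/(e^{2x}+1) = sech x`. -/
def eulerNumber : ℕ → ℤ
  | 0 => 1
  | n + 1 =>
    -∑ k ∈ (Finset.range (n + 1)).attach,
      if Even (n + 1 - k.1) then ((n + 1).choose k.1 : ℤ) * eulerNumber k.1 else 0
  decreasing_by exact Finset.mem_range.mp k.2

/-- `x ≡ y (mod p^m)` for rationals: `v_p(x - y) ≥ m` (with `x = y` allowed). -/
def ratCongr (p m : ℕ) (x y : ℚ) : Prop :=
  x = y ∨ (m : ℤ) ≤ padicValRat p (x - y)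

/-!
Write the summand as `(4k-1)^3 t_k H_k`, with `t_k` the hypergeometric term and `H_k` the inner
sum. The ratio `t_{k+1} / t_k` depends on `n` only through `m = n(n-1)`. A Wilf–Zeilberger
certificate `R(m, k, H)`, linear in `H` with coefficients polynomial in `k`, makes
`G_k = t_k R(m, k, H_k)` satisfy `G_{k+1} - G_k = (4k-1)^3 t_k H_k`. The sum therefore telescopes to `G_{n+1} - G_0`, where
`G_{n+1} = 0` because the factor `(-n)_{n+1}` vanishes, and `G_0 = -(4m+1)(7m+1)/(4m^2)`.
-/

lemma poch_succ (a : ℚ) (k : ℕ) : poch a (k + 1) = poch a k * (a + k) :=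
  prod_range_succ _ _

lemma poch_neg_natCast_succ_self (n : ℕ) : poch (-n) (n + 1) = 0 :=
  prod_eq_zero (self_mem_range_succ n) (neg_add_cancel _)

def termRatio (m K : ℚ) : ℚ :=
  (2 * K - 1) ^ 2 * (K ^ 2 - K - m) / ((K + 1) ^ 2 * (4 * (K + 1) ^ 2 - 4 * m - 1))

def hypTerm (N : ℚ) (k : ℕ) : ℚ :=
  poch (-(1/2)) k ^ 2 * poch (-N) k * poch (N - 1) k /
    ((k.factorial : ℚ) ^ 2 * poch (N + 1/2) k * poch (3/2 - N) k)

lemma hypTerm_zero (N : ℚ) : hypTerm N 0 = 1 := by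
  simp [hypTerm, poch]

lemma hypTerm_succ (N : ℚ) (k : ℕ) :
    hypTerm N (k + 1) = hypTerm N k * termRatio (N * (N - 1)) k := by
  rw [hypTerm, hypTerm, termRatio, div_mul_div_comm, ← mul_div_mul_right _ _ (four_ne_zero' ℚ)]
  simp only [poch_succ, Nat.factorial_succ]
  push_cast
  congr 1 <;> ring

lemma hypTerm_natCast_succ_self (n : ℕ) : hypTerm n (n + 1) = 0 := by
  rw [hypTerm, poch_neg_natCast_succ_self]
  simp

def innerSum (k : ℕ) : ℚ :=
  ∑ j ∈ Icc 1 k, (1 / (4 * (j : ℚ) ^ 2) - 1 / (2 * (j : ℚ) - 3) ^ 2)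

lemma innerSum_zero : innerSum 0 = 0 := by
  simp [innerSum]

lemma innerSum_succ (k : ℕ) :
    innerSum (k + 1) =
      innerSum k + (1 / (4 * ((k : ℚ) + 1) ^ 2) - 1 / (2 * ((k : ℚ) + 1) - 3) ^ 2) := by
  rw [innerSum, innerSum, sum_Icc_succ_top (Nat.le_add_left 1 k)]
  push_cast
  rfl

def wzCertificateA (m K : ℚ) : ℚ :=
  (4 * m + 1) * (7 * m + 1) - 3 * (8 * m + 1) * (4 * m + 1) * K
    + 2 * (32 * m ^ 2 - 2 * m - 1) * K ^ 2 + 12 * (8 * m + 1) * K ^ 3 - 8 * (8 * m + 1) * K ^ 4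

def wzCertificateB (m K : ℚ) : ℚ :=
  -m ^ 2 * (4 * m + 1) * (7 * m + 1) + 3 * m ^ 2 * (8 * m + 1) * (4 * m + 1) * K
    + (-192 * m ^ 4 + 24 * m ^ 3 + 51 * m ^ 2 + 13 * m + 1) * K ^ 2
    - (384 * m ^ 3 + 204 * m ^ 2 + 42 * m + 3) * K ^ 3
    + (384 * m ^ 3 + 84 * m ^ 2 - 8 * m - 2) * K ^ 4
    + 12 * (6 * m + 1) * (4 * m + 1) * K ^ 5 - 8 * (6 * m + 1) * (4 * m + 1) * K ^ 6

def wzCertificate (m K H : ℚ) : ℚ :=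
  (4 * m ^ 2 * K ^ 2 * wzCertificateA m K * H + wzCertificateB m K) / (4 * m ^ 4)

lemma termRatio_mul_wzCertificate_succ (m K H : ℚ) (hm : m ≠ 0) (hK : K + 1 ≠ 0)
    (hK' : 2 * K - 1 ≠ 0) (hD : 4 * (K + 1) ^ 2 - 4 * m - 1 ≠ 0) :
    termRatio m K *
        wzCertificate m (K + 1) (H + (1 / (4 * (K + 1) ^ 2) - 1 / (2 * (K + 1) - 3) ^ 2)) =
      wzCertificate m K H + (4 * K - 1) ^ 3 * H := by
  have h3 : 2 * (K + 1) - 3 ≠ 0 := by contrapose! hK'; linarith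
  unfold termRatio wzCertificate wzCertificateA wzCertificateB
  field_simp
  rw [div_eq_iff (by contrapose! hD; linarith)]
  ring

def wzPotential (n : ℕ) (k : ℕ) : ℚ :=
  hypTerm n k * wzCertificate (n * (n - 1)) k (innerSum k)

lemma wzPotential_succ_sub {n : ℕ} (hn : 2 ≤ n) (k : ℕ) :
    wzPotential n (k + 1) - wzPotential n k = (4 * k - 1 : ℚ) ^ 3 * hypTerm n k * innerSum k := by
  have hn' : (2 : ℚ) ≤ n := by exact_mod_cast hn
  have hm : (n * (n - 1) : ℚ) ≠ 0 := by nlinarith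
  have hk : (k + 1 : ℚ) ≠ 0 := by positivity
  have hk' : 2 * (k : ℚ) - 1 ≠ 0 := by
    rw [sub_ne_zero]; norm_cast; omega
  have hD : 4 * ((k : ℚ) + 1) ^ 2 - 4 * (n * (n - 1)) - 1 ≠ 0 := by
    have hkn : 2 * (k : ℚ) + 3 - 2 * n ≠ 0 := by rw [sub_ne_zero]; norm_cast; omega
    rw [show 4 * ((k : ℚ) + 1) ^ 2 - 4 * (n * (n - 1)) - 1 =
      (2 * k + 1 + 2 * n) * (2 * k + 3 - 2 * n) by ring]
    exact mul_ne_zero (by positivity) hkn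
  rw [wzPotential, wzPotential, hypTerm_succ, innerSum_succ, Nat.cast_succ, mul_assoc,
    termRatio_mul_wzCertificate_succ _ _ _ hm hk hk' hD]
  ring

theorem stmt15 (n : ℕ) (hn : 2 ≤ n) :
    ∑ k ∈ Finset.range (n + 1),
      (4 * k - 1 : ℚ) ^ 3 * (poch (-(1/2)) k ^ 2 * poch (-(n : ℚ)) k * poch ((n : ℚ) - 1) k) /
        ((k.factorial : ℚ) ^ 2 * poch ((n : ℚ) + 1/2) k * poch (3/2 - (n : ℚ)) k) *
        (∑ j ∈ Finset.Icc 1 k, (1 / (4 * (j : ℚ) ^ 2) - 1 / (2 * (j : ℚ) - 3) ^ 2)) =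
      (2 * (n : ℚ) - 1) ^ 2 * (7 * n ^ 2 - 7 * n + 1) / (4 * n ^ 2 * ((n : ℚ) - 1) ^ 2) := by
  have hn' : (2 : ℚ) ≤ n := by exact_mod_cast hn
  have hn0 : (n : ℚ) ≠ 0 := by positivity
  have hn1 : (n : ℚ) - 1 ≠ 0 := by linarith
  calc _ = ∑ k ∈ range (n + 1), (wzPotential n (k + 1) - wzPotential n k) := by
          refine sum_congr rfl fun k _ => ?_
          rw [wzPotential_succ_sub hn, hypTerm, innerSum, mul_div_assoc]
    _ = wzPotential n (n + 1) - wzPotential n 0 := sum_range_sub _ _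
    _ = _ := by
      simp only [wzPotential, hypTerm_natCast_succ_self, hypTerm_zero, innerSum_zero,
        wzCertificate, wzCertificateB]
      field_simp
      ring
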